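/- For every rLTL(□·,◇·) formula φ over a nonempty finite set 𝒫 of atomic propositions there exists a generalized Büchi automaton A over the alphabet Σ = 2^𝒫 (without a designated initial state) together with a family of states (q_b)_{b ∈ B₄} such that: (i) the number of states of A is at most 5^{|cl(φ)|} + 4; (ii) A has at most 4·|cl(φ)| acceptance sets; and (iii) for every b ∈ B₄ and every infinite word σ ∈ Σ^ω, A has an accepting run on σ starting in q_b if and only if V(σ,φ) = b. -/

import Mathlib

/-- Truth values as 4-tuples of Booleans. -/
abbrev TV := Bool × Bool × Bool × Bool

def ttop : TV := (true, true, true, true)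
def tbot : TV := (false, false, false, false)

/-- Componentwise order on 4-tuples. -/
def tle (a b : TV) : Prop :=
  a.1 ≤ b.1 ∧ a.2.1 ≤ b.2.1 ∧ a.2.2.1 ≤ b.2.2.1 ∧ a.2.2.2 ≤ b.2.2.2

instance : DecidableRel tle := fun a b =>
  decidable_of_iff (a.1 ≤ b.1 ∧ a.2.1 ≤ b.2.1 ∧ a.2.2.1 ≤ b.2.2.1 ∧ a.2.2.2 ≤ b.2.2.2) Iff.rfl

def tmeet (a b : TV) : TV :=
  (a.1 && b.1, a.2.1 && b.2.1, a.2.2.1 && b.2.2.1, a.2.2.2 && b.2.2.2)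

def tjoin (a b : TV) : TV :=
  (a.1 || b.1, a.2.1 || b.2.1, a.2.2.1 || b.2.2.1, a.2.2.2 || b.2.2.2)

/-- da Costa negation. -/
def tneg (a : TV) : TV := if a = ttop then tbot else ttop

/-- Residual implication. -/
def timp (a b : TV) : TV := if tle a b then ttop else b

/-- Infimum of a Boolean sequence. -/
noncomputable def bInf (f : ℕ → Bool) : Bool :=
  @decide (∀ i, f i = true) (Classical.propDecidable _)

/-- Supremum of a Boolean sequence. -/
noncomputable def bSup (f : ℕ → Bool) : Bool :=
  @decide (∃ i, f i = true) (Classical.propDecidable _)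

/-- Bounded infimum over `i < n`. -/
noncomputable def bInfLt (n : ℕ) (f : ℕ → Bool) : Bool :=
  @decide (∀ i, i < n → f i = true) (Classical.propDecidable _)

/-- Bounded supremum over `i < n`. -/
noncomputable def bSupLt (n : ℕ) (f : ℕ → Bool) : Bool :=
  @decide (∃ i, i < n ∧ f i = true) (Classical.propDecidable _)

/-- Suffix of an infinite word. -/
def suffix {P : Type} (σ : ℕ → Set P) (i : ℕ) : ℕ → Set P := fun j => σ (i + j)

/-- rLTL(□,◇) formulas. -/
inductive RFormula (P : Type) : Type where
  | atom : P → RFormula P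
  | not : RFormula P → RFormula P
  | and : RFormula P → RFormula P → RFormula P
  | or : RFormula P → RFormula P → RFormula P
  | imp : RFormula P → RFormula P → RFormula P
  | always : RFormula P → RFormula P
  | eventually : RFormula P → RFormula P
  deriving DecidableEq

open scoped Classical in
/-- The 5-valued rLTL semantics. -/
noncomputable def rV {P : Type} : RFormula P → (ℕ → Set P) → TV
  | .atom p, σ => if p ∈ σ 0 then ttop else tbot
  | .not φ, σ => tneg (rV φ σ)
  | .and φ ψ, σ => tmeet (rV φ σ) (rV ψ σ)
  | .or φ ψ, σ => tjoin (rV φ σ) (rV ψ σ)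
  | .imp φ ψ, σ => timp (rV φ σ) (rV ψ σ)
  | .always φ, σ =>
      (bInf fun i => (rV φ (suffix σ i)).1,
       bSup fun j => bInf fun i => (rV φ (suffix σ (j + i))).2.1,
       bInf fun j => bSup fun i => (rV φ (suffix σ (j + i))).2.2.1,
       bSup fun i => (rV φ (suffix σ i)).2.2.2)
  | .eventually φ, σ =>
      (bSup fun i => (rV φ (suffix σ i)).1,
       bSup fun i => (rV φ (suffix σ i)).2.1,
       bSup fun i => (rV φ (suffix σ i)).2.2.1,
       bSup fun i => (rV φ (suffix σ i)).2.2.2)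

/-- Projection onto the k-th component. -/
def comp : Fin 4 → TV → Bool
  | 0, a => a.1
  | 1, a => a.2.1
  | 2, a => a.2.2.1
  | 3, a => a.2.2.2

/-- The closure (set of subformulas) of an rLTL(□,◇) formula. -/
def cl {P : Type} [DecidableEq P] : RFormula P → Finset (RFormula P)
  | .atom p => {.atom p}
  | .not φ => insert (.not φ) (cl φ)
  | .and φ ψ => insert (.and φ ψ) (cl φ ∪ cl ψ)
  | .or φ ψ => insert (.or φ ψ) (cl φ ∪ cl ψ)
  | .imp φ ψ => insert (.imp φ ψ) (cl φ ∪ cl ψ)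
  | .always φ => insert (.always φ) (cl φ)
  | .eventually φ => insert (.eventually φ) (cl φ)

/-- A generalized Büchi automaton (without designated initial state) over alphabet `S`
with state space `Q`: a transition relation and a finite set of acceptance sets. -/
structure GBA (S : Type) (Q : Type) where
  Δ : Q → S → Q → Prop
  Acc : Finset (Set Q)

/-- `A` has an accepting run on `σ` starting in state `q`: there is a run starting in `q`,
following the transition relation, that visits every acceptance set infinitely often. -/
def AcceptsFrom {S Q : Type} (A : GBA S Q) (q : Q) (σ : ℕ → S) : Prop :=
  ∃ ρ : ℕ → Q, ρ 0 = q ∧ (∀ i, A.Δ (ρ i) (σ i) (ρ (i + 1)))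
    ∧ ∀ F ∈ A.Acc, ∀ i : ℕ, ∃ j, i ≤ j ∧ ρ j ∈ F

/-- The 4-tuples belonging to B₄ (monotone tuples). -/
def TVMono (a : TV) : Prop := a.1 ≤ a.2.1 ∧ a.2.1 ≤ a.2.2.1 ∧ a.2.2.1 ≤ a.2.2.2


/-!
The automaton guesses, at every position of the word, a labeling of the closure of `φ` by truth
values, and reads off the value of `φ` at the start. Atoms and Boolean connectives are checked
locally. A temporal operator is checked through its one-step unfolding (the first component of
`□·χ` holds now iff it holds for `χ` now and for `□·χ` next, and so on), whose spurious solutions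
are ruled out by one Büchi condition per component. The `◇□` and `□◇` components of `□·χ` are
constant along the word; to verify them the slot of `□·χ` carries two guesses: whether the second
component of `χ` holds from now on, and whether its third component holds somewhere from now on.

A consistent labeling is determined by the values at atoms and temporal subformulas and by the
guesses, and the guesses are forced by the values unless the argument of `□·` is a Boolean
connective, whose own slot is then free to store them. This injects consistent labelings into
`cl φ → B₄`, missing the maps that give an atom a value other than `⊤`, `⊥`, so there are fewer
than `5 ^ |cl φ|` of them; five initial states `q_b` are added.
-/

open Filter

section BoolStreams

@[simp] lemma bInf_eq_true {f : ℕ → Bool} : bInf f = true ↔ ∀ i, f i = true := by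
  simp [bInf]

@[simp] lemma bSup_eq_true {f : ℕ → Bool} : bSup f = true ↔ ∃ i, f i = true := by
  simp [bSup]

@[simp] lemma bSup_eq_false {f : ℕ → Bool} : bSup f = false ↔ ∀ i, f i = false := by
  simp [bSup]

lemma bInf_eq_not_bSup_not (f : ℕ → Bool) : bInf f = !bSup fun i => !f i := by
  rw [Bool.eq_iff_iff]; simp

lemma bInf_eq_and (f : ℕ → Bool) : bInf f = (f 0 && bInf fun i => f (1 + i)) := by
  rw [Bool.eq_iff_iff]
  simp only [bInf_eq_true, Bool.and_eq_true]
  refine ⟨fun h => ⟨h 0, fun i => h _⟩, fun ⟨h0, h⟩ i => ?_⟩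
  cases i with
  | zero => exact h0
  | succ i => simpa [Nat.add_comm] using h i

lemma bSup_eq_or (f : ℕ → Bool) : bSup f = (f 0 || bSup fun i => f (1 + i)) := by
  rw [Bool.eq_iff_iff]
  simp only [bSup_eq_true, Bool.or_eq_true]
  refine ⟨fun ⟨i, hi⟩ => ?_, fun h => h.elim (⟨0, ·⟩) fun ⟨i, hi⟩ => ⟨_, hi⟩⟩
  cases i with
  | zero => exact .inl hi
  | succ i => exact .inr ⟨i, by simpa [Nat.add_comm] using hi⟩

lemma eventually_atTop_add_iff {p : ℕ → Prop} (t : ℕ) :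
    (∀ᶠ n in atTop, p (t + n)) ↔ ∀ᶠ n in atTop, p n := by
  conv_rhs => rw [← map_add_atTop_eq_nat t, eventually_map]
  simp_rw [Nat.add_comm _ t]

lemma bSup_bInf_eq_true {f : ℕ → Bool} :
    (bSup fun j => bInf fun i => f (j + i)) = true ↔ ∀ᶠ n in atTop, f n = true := by
  simp only [bSup_eq_true, bInf_eq_true, eventually_atTop]
  refine ⟨fun ⟨j, h⟩ => ⟨j, fun n hn => ?_⟩,
    fun ⟨j, h⟩ => ⟨j, fun i => h _ (Nat.le_add_right j i)⟩⟩
  obtain ⟨i, rfl⟩ := Nat.exists_eq_add_of_le hn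
  exact h i

lemma bInf_bSup_eq_true {f : ℕ → Bool} :
    (bInf fun j => bSup fun i => f (j + i)) = true ↔ ∃ᶠ n in atTop, f n = true := by
  simp only [bInf_eq_true, bSup_eq_true, frequently_atTop]
  refine ⟨fun h j => ?_, fun h j => ?_⟩
  · obtain ⟨i, hi⟩ := h j
    exact ⟨j + i, Nat.le_add_right j i, hi⟩
  · obtain ⟨n, hn, hfn⟩ := h j
    obtain ⟨i, rfl⟩ := Nat.exists_eq_add_of_le hn
    exact ⟨i, hfn⟩

lemma bSup_bInf_add (f : ℕ → Bool) (t : ℕ) :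
    (bSup fun j => bInf fun i => f (t + (j + i))) = bSup fun j => bInf fun i => f (j + i) := by
  rw [Bool.eq_iff_iff, bSup_bInf_eq_true (f := fun n => f (t + n)), bSup_bInf_eq_true,
    eventually_atTop_add_iff t (p := fun n => f n = true)]

lemma bInf_bSup_add (f : ℕ → Bool) (t : ℕ) :
    (bInf fun j => bSup fun i => f (t + (j + i))) = bInf fun j => bSup fun i => f (j + i) := by
  rw [Bool.eq_iff_iff, bInf_bSup_eq_true (f := fun n => f (t + n)), bInf_bSup_eq_true,
    ← not_iff_not, not_frequently, not_frequently,
    eventually_atTop_add_iff t (p := fun n => ¬f n = true)]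

lemma eq_bSup_of_step {y a : ℕ → Bool} (hstep : ∀ t, a t = (y t || a (t + 1)))
    (hacc : ∃ᶠ t in atTop, a t = false ∨ y t = true) (t : ℕ) :
    a t = bSup fun i => y (t + i) := by
  rw [Bool.eq_iff_iff, bSup_eq_true]
  constructor
  · intro hat
    by_contra! hy
    have ha : ∀ i, a (t + i) = true := fun i => by
      induction i with
      | zero => exact hat
      | succ i ih => simpa [hy i, ← Nat.add_assoc] using (hstep (t + i)).symm.trans ih
    obtain ⟨s, hts, hs⟩ := frequently_atTop.1 hacc t
    obtain ⟨i, rfl⟩ := Nat.exists_eq_add_of_le hts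
    simp [ha i, hy i] at hs
  · rintro ⟨i, hi⟩
    induction i generalizing t with
    | zero => simp [hstep t, by simpa using hi]
    | succ i ih =>
      rw [hstep t, ih (t + 1) (by rwa [Nat.add_right_comm, Nat.add_assoc])]
      simp

lemma eq_bInf_of_step {y a : ℕ → Bool} (hstep : ∀ t, a t = (y t && a (t + 1)))
    (hacc : ∃ᶠ t in atTop, a t = true ∨ y t = false) (t : ℕ) :
    a t = bInf fun i => y (t + i) := by
  have := eq_bSup_of_step (y := fun t => !y t) (a := fun t => !a t)
    (fun t => by simp [hstep t]) (by simpa using hacc) t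
  simpa [bInf_eq_not_bSup_not] using congrArg (!·) this

lemma eventually_bInf_of_eventually {y : ℕ → Bool} (h : ∀ᶠ n in atTop, y n = true) :
    ∀ᶠ t in atTop, (bInf fun i => y (t + i)) = true := by
  obtain ⟨N, hN⟩ := eventually_atTop.1 h
  exact eventually_atTop.2 ⟨N, fun t ht => bInf_eq_true.2 fun i => hN _ (by omega)⟩

lemma eventually_bSup_of_eventually {y : ℕ → Bool} (h : ∀ᶠ n in atTop, y n = false) :
    ∀ᶠ t in atTop, (bSup fun i => y (t + i)) = false := by
  obtain ⟨N, hN⟩ := eventually_atTop.1 h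
  exact eventually_atTop.2 ⟨N, fun t ht => bSup_eq_false.2 fun i => hN _ (by omega)⟩

lemma frequently_bInf_or (y : ℕ → Bool) :
    ∃ᶠ t in atTop, (bInf fun i => y (t + i)) = true ∨ y t = false := by
  by_cases h : ∃ᶠ t in atTop, y t = false
  · exact h.mono fun _ => .inr
  · simp only [not_frequently, Bool.not_eq_false] at h
    exact (eventually_bInf_of_eventually h).frequently.mono fun _ => .inl

lemma frequently_bSup_or (y : ℕ → Bool) :
    ∃ᶠ t in atTop, (bSup fun i => y (t + i)) = false ∨ y t = true := by
  by_cases h : ∃ᶠ t in atTop, y t = true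
  · exact h.mono fun _ => .inr
  · simp only [not_frequently, Bool.not_eq_true] at h
    exact (eventually_bSup_of_eventually h).frequently.mono fun _ => .inl

lemma frequently_bSup_bInf_or (y : ℕ → Bool) :
    ∃ᶠ t in atTop, ((bSup fun j => bInf fun i => y (j + i)) = true ∧
        (bInf fun i => y (t + i)) = true) ∨
      ((bSup fun j => bInf fun i => y (j + i)) = false ∧ y t = false) := by
  cases hc : bSup fun j => bInf fun i => y (j + i)
  · have h := mt (bSup_bInf_eq_true (f := y)).2 (by simp [hc])
    exact (not_eventually.1 h).mono fun t ht => .inr ⟨rfl, by simpa using ht⟩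
  · simpa using (eventually_bInf_of_eventually (bSup_bInf_eq_true.1 hc)).frequently

lemma frequently_bInf_bSup_or (y : ℕ → Bool) :
    ∃ᶠ t in atTop, ((bInf fun j => bSup fun i => y (j + i)) = true ∧ y t = true) ∨
      ((bInf fun j => bSup fun i => y (j + i)) = false ∧ (bSup fun i => y (t + i)) = false) := by
  cases hc : bInf fun j => bSup fun i => y (j + i)
  · have h := mt (bInf_bSup_eq_true (f := y)).2 (by simp [hc])
    simpa [not_frequently] using (eventually_bSup_of_eventually (by simpa using h)).frequently
  · simpa using bInf_bSup_eq_true.1 hc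

lemma eq_bSup_bInf_of_frequently {y : ℕ → Bool} {c : Bool}
    (hacc : ∃ᶠ t in atTop, (c = true ∧ (bInf fun i => y (t + i)) = true) ∨
      (c = false ∧ y t = false)) :
    c = bSup fun j => bInf fun i => y (j + i) := by
  rw [Bool.eq_iff_iff, bSup_bInf_eq_true]
  constructor
  · intro hc
    obtain ⟨t, ht⟩ := (hacc.mono fun t h => by simpa [hc] using h).exists
    exact eventually_atTop.2 ⟨t, fun n hn => by simpa [Nat.add_sub_cancel' hn] using ht (n - t)⟩
  · intro hev
    by_contra hc
    have hfalse : ∃ᶠ t in atTop, y t = false := hacc.mono fun t h => by simpa [hc] using h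
    obtain ⟨t, ht, ht'⟩ := (hfalse.and_eventually hev).exists
    simp [ht] at ht'

lemma eq_bInf_bSup_of_frequently {y : ℕ → Bool} {c : Bool}
    (hacc : ∃ᶠ t in atTop, (c = true ∧ y t = true) ∨
      (c = false ∧ (bSup fun i => y (t + i)) = false)) :
    c = bInf fun j => bSup fun i => y (j + i) := by
  rw [Bool.eq_iff_iff, bInf_bSup_eq_true]
  constructor
  · intro hc
    exact hacc.mono fun t h => by simpa [hc] using h
  · intro hfreq
    by_contra hc
    obtain ⟨t, ht⟩ := (hacc.mono fun t h => by simpa [hc] using h).exists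
    have hev : ∀ᶠ n in atTop, y n = false :=
      eventually_atTop.2 ⟨t, fun n hn => by simpa [Nat.add_sub_cancel' hn] using ht (n - t)⟩
    obtain ⟨n, hn, hn'⟩ := (hfreq.and_eventually hev).exists
    simp [hn] at hn'

end BoolStreams

noncomputable section TemporalStreams

/-- The guess bits are used only at `□·` subformulas and are `true` elsewhere. -/
abbrev Slot : Type := TV × Bool × Bool

def alwaysVal (x : ℕ → TV) : TV :=
  (bInf fun i => (x i).1, bSup fun j => bInf fun i => (x (j + i)).2.1,
    bInf fun j => bSup fun i => (x (j + i)).2.2.1, bSup fun i => (x i).2.2.2)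

def eventuallyVal (x : ℕ → TV) : TV :=
  (bSup fun i => (x i).1, bSup fun i => (x i).2.1, bSup fun i => (x i).2.2.1,
    bSup fun i => (x i).2.2.2)

def alwaysSlot (x : ℕ → TV) : Slot :=
  (alwaysVal x, bInf fun i => (x i).2.1, bSup fun i => (x i).2.2.1)

structure AlwaysStep (x : TV) (s s' : Slot) : Prop where
  fst : s.1.1 = (x.1 && s'.1.1)
  snd : s.1.2.1 = s'.1.2.1
  thd : s.1.2.2.1 = s'.1.2.2.1
  fth : s.1.2.2.2 = (x.2.2.2 || s'.1.2.2.2)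
  guess₂ : s.2.1 = (x.2.1 && s'.2.1)
  guess₃ : s.2.2 = (x.2.2.1 || s'.2.2)

def AlwaysAcc (x : TV) (s : Slot) : Fin 4 → Prop
  | 0 => s.1.1 = true ∨ x.1 = false
  | 1 => (s.1.2.1 = true ∧ s.2.1 = true) ∨ (s.1.2.1 = false ∧ x.2.1 = false)
  | 2 => (s.1.2.2.1 = true ∧ x.2.2.1 = true) ∨ (s.1.2.2.1 = false ∧ s.2.2 = false)
  | 3 => s.1.2.2.2 = false ∨ x.2.2.2 = true

def EventuallyStep (x a a' : TV) : Prop :=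
  ∀ k, comp k a = (comp k x || comp k a')

def EventuallyAcc (x a : TV) (k : Fin 4) : Prop :=
  comp k a = false ∨ comp k x = true

lemma eq_of_comp_eq {a b : TV} (h : ∀ k, comp k a = comp k b) : a = b := by
  ext
  exacts [h 0, h 1, h 2, h 3]

lemma comp_eventuallyVal (x : ℕ → TV) (k : Fin 4) :
    comp k (eventuallyVal x) = bSup fun i => comp k (x i) := by
  fin_cases k <;> rfl

lemma alwaysVal_add_snd (x : ℕ → TV) (t : ℕ) :
    (alwaysVal fun i => x (t + i)).2.1 = (alwaysVal x).2.1 :=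
  bSup_bInf_add (fun n => (x n).2.1) t

lemma alwaysVal_add_thd (x : ℕ → TV) (t : ℕ) :
    (alwaysVal fun i => x (t + i)).2.2.1 = (alwaysVal x).2.2.1 :=
  bInf_bSup_add (fun n => (x n).2.2.1) t

theorem fst_eq_alwaysVal_of_run {x : ℕ → TV} {s : ℕ → Slot}
    (hstep : ∀ t, AlwaysStep (x t) (s t) (s (t + 1)))
    (hacc : ∀ k, ∃ᶠ t in atTop, AlwaysAcc (x t) (s t) k) (t : ℕ) :
    (s t).1 = alwaysVal fun i => x (t + i) := by
  have hsnd : ∀ t, (s t).1.2.1 = (s 0).1.2.1 := fun t => by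
    induction t with
    | zero => rfl
    | succ t ih => rw [← ih, (hstep t).snd]
  have hthd : ∀ t, (s t).1.2.2.1 = (s 0).1.2.2.1 := fun t => by
    induction t with
    | zero => rfl
    | succ t ih => rw [← ih, (hstep t).thd]
  have hguess₂ : ∀ t, (s t).2.1 = bInf fun i => (x (t + i)).2.1 :=
    eq_bInf_of_step (fun t => (hstep t).guess₂) <| (hacc 1).mono fun _ h => h.imp (·.2) (·.2)
  have hguess₃ : ∀ t, (s t).2.2 = bSup fun i => (x (t + i)).2.2.1 :=
    eq_bSup_of_step (fun t => (hstep t).guess₃) <|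
      (hacc 2).mono fun _ h => h.symm.imp (·.2) (·.2)
  ext
  · exact eq_bInf_of_step (fun t => (hstep t).fst) (hacc 0) t
  · rw [hsnd, alwaysVal_add_snd]
    refine eq_bSup_bInf_of_frequently (y := fun n => (x n).2.1) <| (hacc 1).mono fun t h => ?_
    simpa only [AlwaysAcc, hsnd t, hguess₂ t] using h
  · rw [hthd, alwaysVal_add_thd]
    refine eq_bInf_bSup_of_frequently (y := fun n => (x n).2.2.1) <| (hacc 2).mono fun t h => ?_
    simpa only [AlwaysAcc, hthd t, hguess₃ t] using h
  · exact eq_bSup_of_step (fun t => (hstep t).fth) (hacc 3) t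

theorem eq_eventuallyVal_of_run {x a : ℕ → TV}
    (hstep : ∀ t, EventuallyStep (x t) (a t) (a (t + 1)))
    (hacc : ∀ k, ∃ᶠ t in atTop, EventuallyAcc (x t) (a t) k) (t : ℕ) :
    a t = eventuallyVal fun i => x (t + i) :=
  eq_of_comp_eq fun k => by
    rw [comp_eventuallyVal]
    exact eq_bSup_of_step (fun t => hstep t k) (hacc k) t

lemma alwaysStep_alwaysSlot (x : ℕ → TV) :
    AlwaysStep (x 0) (alwaysSlot x) (alwaysSlot fun i => x (1 + i)) where
  fst := bInf_eq_and _
  snd := (alwaysVal_add_snd x 1).symm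
  thd := (alwaysVal_add_thd x 1).symm
  fth := bSup_eq_or _
  guess₂ := bInf_eq_and _
  guess₃ := bSup_eq_or _

lemma frequently_alwaysAcc_alwaysSlot (x : ℕ → TV) (k : Fin 4) :
    ∃ᶠ t in atTop, AlwaysAcc (x t) (alwaysSlot fun i => x (t + i)) k := by
  fin_cases k
  · exact frequently_bInf_or fun n => (x n).1
  · refine (frequently_bSup_bInf_or fun n => (x n).2.1).mono fun t h => ?_
    simp only [AlwaysAcc, alwaysSlot, alwaysVal_add_snd]
    exact h
  · refine (frequently_bInf_bSup_or fun n => (x n).2.2.1).mono fun t h => ?_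
    simp only [AlwaysAcc, alwaysSlot, alwaysVal_add_thd]
    exact h
  · exact frequently_bSup_or fun n => (x n).2.2.2

lemma eventuallyStep_eventuallyVal (x : ℕ → TV) :
    EventuallyStep (x 0) (eventuallyVal x) (eventuallyVal fun i => x (1 + i)) := fun k => by
  simp only [comp_eventuallyVal]
  exact bSup_eq_or _

lemma frequently_eventuallyAcc_eventuallyVal (x : ℕ → TV) (k : Fin 4) :
    ∃ᶠ t in atTop, EventuallyAcc (x t) (eventuallyVal fun i => x (t + i)) k := by
  simpa only [EventuallyAcc, comp_eventuallyVal] using frequently_bSup_or fun n => comp k (x n)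

lemma tvMono_alwaysVal {x : ℕ → TV} (hx : ∀ i, TVMono (x i)) : TVMono (alwaysVal x) := by
  refine ⟨Bool.le_iff_imp.2 fun h => ?_, Bool.le_iff_imp.2 fun h => ?_,
    Bool.le_iff_imp.2 fun h => ?_⟩
  · exact bSup_eq_true.2 ⟨0, bInf_eq_true.2 fun i => by
      simpa using Bool.le_iff_imp.1 (hx i).1 (bInf_eq_true.1 h i)⟩
  · exact bInf_bSup_eq_true.2 (((bSup_bInf_eq_true (f := fun n => (x n).2.1)).1 h).mono
      fun n hn => Bool.le_iff_imp.1 (hx n).2.1 hn).frequently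
  · obtain ⟨n, hn⟩ := ((bInf_bSup_eq_true (f := fun n => (x n).2.2.1)).1 h).exists
    exact bSup_eq_true.2 ⟨n, Bool.le_iff_imp.1 (hx n).2.2 hn⟩

lemma tvMono_eventuallyVal {x : ℕ → TV} (hx : ∀ i, TVMono (x i)) :
    TVMono (eventuallyVal x) := by
  refine ⟨Bool.le_iff_imp.2 fun h => ?_, Bool.le_iff_imp.2 fun h => ?_,
    Bool.le_iff_imp.2 fun h => ?_⟩ <;> obtain ⟨i, hi⟩ := bSup_eq_true.1 h
  exacts [bSup_eq_true.2 ⟨i, Bool.le_iff_imp.1 (hx i).1 hi⟩,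
    bSup_eq_true.2 ⟨i, Bool.le_iff_imp.1 (hx i).2.1 hi⟩,
    bSup_eq_true.2 ⟨i, Bool.le_iff_imp.1 (hx i).2.2 hi⟩]

lemma alwaysSlot_snd_of_boolean {x : ℕ → TV} (hx : ∀ i, x i = ttop ∨ x i = tbot) :
    (alwaysSlot x).2 = ((alwaysVal x).1, (alwaysVal x).2.2.2) := by
  have h₂ : ∀ i, (x i).2.1 = (x i).1 := fun i => by
    rcases hx i with h | h <;> simp [h, ttop, tbot]
  have h₃ : ∀ i, (x i).2.2.1 = (x i).2.2.2 := fun i => by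
    rcases hx i with h | h <;> simp [h, ttop, tbot]
  simp [alwaysSlot, alwaysVal, h₂, h₃]

lemma alwaysSlot_snd_of_antitone {x : ℕ → TV} (h₂ : Antitone fun i => (x i).2.1)
    (h₃ : Antitone fun i => (x i).2.2.1) :
    (alwaysSlot x).2 = ((alwaysVal x).2.1, (x 0).2.2.1) := by
  refine Prod.ext (Bool.eq_iff_iff.2 ?_) (Bool.eq_iff_iff.2 ?_)
  · change (bInf fun i => (x i).2.1) = true ↔
      (bSup fun j => bInf fun i => (x (j + i)).2.1) = true
    rw [bInf_eq_true, bSup_bInf_eq_true (f := fun n => (x n).2.1), eventually_atTop]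
    refine ⟨fun h => ⟨0, fun n _ => h n⟩, fun ⟨N, hN⟩ i => ?_⟩
    exact Bool.le_iff_imp.1 (h₂ (Nat.le_add_right i N)) (hN _ (Nat.le_add_left N i))
  · simp only [alwaysSlot, bSup_eq_true]
    exact ⟨fun ⟨i, hi⟩ => Bool.le_iff_imp.1 (h₃ (Nat.zero_le i)) hi, fun h => ⟨0, h⟩⟩

lemma antitone_comp_eventuallyVal (x : ℕ → TV) (k : Fin 4) :
    Antitone fun t => comp k (eventuallyVal fun i => x (t + i)) := by
  intro t t' htt'
  simp only [comp_eventuallyVal]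
  refine Bool.le_iff_imp.2 fun h => ?_
  obtain ⟨i, hi⟩ := bSup_eq_true.1 h
  exact bSup_eq_true.2 ⟨t' - t + i, by rwa [← Nat.add_assoc, Nat.add_sub_cancel' htt']⟩

end TemporalStreams

section Semantics

variable {P : Type}

lemma suffix_apply (σ : ℕ → Set P) (i j : ℕ) : suffix σ i j = σ (i + j) := rfl

@[simp] lemma suffix_zero (σ : ℕ → Set P) : suffix σ 0 = σ := by
  funext j
  simp [suffix]

@[simp] lemma suffix_suffix (σ : ℕ → Set P) (i j : ℕ) :
    suffix (suffix σ i) j = suffix σ (i + j) := by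
  funext k
  simp [suffix, Nat.add_assoc]

lemma rV_always (χ : RFormula P) (σ : ℕ → Set P) :
    rV (.always χ) σ = alwaysVal fun i => rV χ (suffix σ i) := rfl

lemma rV_eventually (χ : RFormula P) (σ : ℕ → Set P) :
    rV (.eventually χ) σ = eventuallyVal fun i => rV χ (suffix σ i) := rfl

lemma rV_atom_eq_ttop_or_tbot (p : P) (σ : ℕ → Set P) :
    rV (.atom p) σ = ttop ∨ rV (.atom p) σ = tbot := by
  simp only [rV]
  split_ifs <;> simp

lemma rV_not_eq_ttop_or_tbot (χ : RFormula P) (σ : ℕ → Set P) :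
    rV (.not χ) σ = ttop ∨ rV (.not χ) σ = tbot := by
  simp only [rV, tneg]
  split_ifs <;> simp

instance : DecidablePred TVMono := fun a =>
  inferInstanceAs (Decidable (a.1 ≤ a.2.1 ∧ a.2.1 ≤ a.2.2.1 ∧ a.2.2.1 ≤ a.2.2.2))

lemma tvMono_tmeet : ∀ a b : TV, TVMono a → TVMono b → TVMono (tmeet a b) := by decide

lemma tvMono_tjoin : ∀ a b : TV, TVMono a → TVMono b → TVMono (tjoin a b) := by decide

lemma tvMono_timp : ∀ a b : TV, TVMono b → TVMono (timp a b) := by decide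

lemma tvMono_rV (ψ : RFormula P) (σ : ℕ → Set P) : TVMono (rV ψ σ) := by
  induction ψ generalizing σ with
  | atom p => rcases rV_atom_eq_ttop_or_tbot p σ with h | h <;> rw [h] <;> decide
  | not χ _ => rcases rV_not_eq_ttop_or_tbot χ σ with h | h <;> rw [h] <;> decide
  | and χ₁ χ₂ ih₁ ih₂ =>
    exact tvMono_tmeet _ _ (ih₁ σ) (ih₂ σ)
  | or χ₁ χ₂ ih₁ ih₂ =>
    exact tvMono_tjoin _ _ (ih₁ σ) (ih₂ σ)
  | imp χ₁ χ₂ _ ih₂ => exact tvMono_timp _ _ (ih₂ σ)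
  | always χ ih => exact tvMono_alwaysVal fun i => ih _
  | eventually χ ih => exact tvMono_eventuallyVal fun i => ih _

lemma antitone_rV_always_suffix (χ : RFormula P) (σ : ℕ → Set P) :
    (Antitone fun t => (rV (.always χ) (suffix σ t)).2.1) ∧
      Antitone fun t => (rV (.always χ) (suffix σ t)).2.2.1 := by
  simp only [rV_always, suffix_suffix, alwaysVal_add_snd (fun i => rV χ (suffix σ i)),
    alwaysVal_add_thd (fun i => rV χ (suffix σ i))]
  exact ⟨antitone_const, antitone_const⟩

lemma antitone_rV_eventually_suffix (χ : RFormula P) (σ : ℕ → Set P) :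
    (Antitone fun t => (rV (.eventually χ) (suffix σ t)).2.1) ∧
      Antitone fun t => (rV (.eventually χ) (suffix σ t)).2.2.1 := by
  simp only [rV_eventually, suffix_suffix]
  exact ⟨antitone_comp_eventuallyVal (fun i => rV χ (suffix σ i)) 1,
    antitone_comp_eventuallyVal (fun i => rV χ (suffix σ i)) 2⟩

end Semantics

section Labelings

variable {P : Type}

abbrev Labeling (P : Type) : Type := RFormula P → Slot

/-- True of the canonical labeling, since atoms and negations only take the values `⊤`, `⊥`, and
the second and third components of a temporal formula are antitone along the word. -/
def AlwaysGuessConsistent : RFormula P → Slot → TV → Prop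
  | .atom _, s, _ | .not _, s, _ => s.2 = (s.1.1, s.1.2.2.2)
  | .always _, s, x | .eventually _, s, x => s.2 = (s.1.2.1, x.2.2.1)
  | _, _, _ => True

def ConsistentAt (V : Labeling P) : RFormula P → Prop
  | .atom p =>
    ((V (.atom p)).1 = ttop ∨ (V (.atom p)).1 = tbot) ∧ (V (.atom p)).2 = (true, true)
  | .not χ => V (.not χ) = (tneg (V χ).1, true, true)
  | .and χ₁ χ₂ => V (.and χ₁ χ₂) = (tmeet (V χ₁).1 (V χ₂).1, true, true)
  | .or χ₁ χ₂ => V (.or χ₁ χ₂) = (tjoin (V χ₁).1 (V χ₂).1, true, true)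
  | .imp χ₁ χ₂ => V (.imp χ₁ χ₂) = (timp (V χ₁).1 (V χ₂).1, true, true)
  | .always χ => TVMono (V (.always χ)).1 ∧ AlwaysGuessConsistent χ (V (.always χ)) (V χ).1
  | .eventually χ => TVMono (V (.eventually χ)).1 ∧ (V (.eventually χ)).2 = (true, true)

open scoped Classical in
def StepAt (V : Labeling P) (a : Set P) (W : Labeling P) : RFormula P → Prop
  | .atom p => (V (.atom p)).1 = if p ∈ a then ttop else tbot
  | .always χ => AlwaysStep (V χ).1 (V (.always χ)) (W (.always χ))
  | .eventually χ => EventuallyStep (V χ).1 (V (.eventually χ)).1 (W (.eventually χ)).1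
  | _ => True

def AcceptingAt (V : Labeling P) : RFormula P → Fin 4 → Prop
  | .always χ, k => AlwaysAcc (V χ).1 (V (.always χ)) k
  | .eventually χ, k => EventuallyAcc (V χ).1 (V (.eventually χ)).1 k
  | _, _ => True

structure IsAcceptingRun (S : Finset (RFormula P)) (σ : ℕ → Set P) (V : ℕ → Labeling P) :
    Prop where
  consistentAt : ∀ t, ∀ ψ ∈ S, ConsistentAt (V t) ψ
  stepAt : ∀ t, ∀ ψ ∈ S, StepAt (V t) (σ t) (V (t + 1)) ψ
  acceptingAt : ∀ ψ ∈ S, ∀ k, ∃ᶠ t in atTop, AcceptingAt (V t) ψ k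

variable {S T : Finset (RFormula P)} {σ : ℕ → Set P} {V W : ℕ → Labeling P}

lemma IsAcceptingRun.mono (h : IsAcceptingRun S σ V) (hTS : T ⊆ S) : IsAcceptingRun T σ V :=
  ⟨fun t ψ hψ => h.consistentAt t ψ (hTS hψ), fun t ψ hψ => h.stepAt t ψ (hTS hψ),
    fun ψ hψ => h.acceptingAt ψ (hTS hψ)⟩

variable [DecidableEq P]

lemma mem_cl_self (ψ : RFormula P) : ψ ∈ cl ψ := by
  cases ψ <;> simp [cl]

lemma cl_subset_of_mem {φ ψ : RFormula P} (h : ψ ∈ cl φ) : cl ψ ⊆ cl φ := by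
  induction φ with
  | atom p => simp_all [cl]
  | not χ ih | always χ ih | eventually χ ih =>
    rcases Finset.mem_insert.1 h with rfl | h
    · rfl
    · exact (ih h).trans (Finset.subset_insert _ _)
  | and χ₁ χ₂ ih₁ ih₂ | or χ₁ χ₂ ih₁ ih₂ | imp χ₁ χ₂ ih₁ ih₂ =>
    rcases Finset.mem_insert.1 h with rfl | h
    · rfl
    · rcases Finset.mem_union.1 h with h | h
      · exact (ih₁ h).trans (Finset.subset_union_left.trans (Finset.subset_insert _ _))
      · exact (ih₂ h).trans (Finset.subset_union_right.trans (Finset.subset_insert _ _))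

lemma consistentAt_congr {V W : Labeling P} {ψ : RFormula P} (h : ∀ χ ∈ cl ψ, V χ = W χ) :
    ConsistentAt V ψ ↔ ConsistentAt W ψ := by
  cases ψ with
  | atom p => simp only [ConsistentAt, h _ (mem_cl_self _)]
  | not χ | always χ | eventually χ =>
    simp only [ConsistentAt, h _ (mem_cl_self _), h χ (by simp [cl, mem_cl_self])]
  | and χ₁ χ₂ | or χ₁ χ₂ | imp χ₁ χ₂ =>
    simp only [ConsistentAt, h _ (mem_cl_self _), h χ₁ (by simp [cl, mem_cl_self]),
      h χ₂ (by simp [cl, mem_cl_self])]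

lemma stepAt_congr {V V' W W' : Labeling P} {a : Set P} {ψ : RFormula P}
    (hV : ∀ χ ∈ cl ψ, V χ = V' χ) (hW : ∀ χ ∈ cl ψ, W χ = W' χ) :
    StepAt V a W ψ ↔ StepAt V' a W' ψ := by
  cases ψ with
  | atom p => simp only [StepAt, hV _ (mem_cl_self _)]
  | always χ | eventually χ =>
    simp only [StepAt, hV _ (mem_cl_self _), hW _ (mem_cl_self _),
      hV χ (by simp [cl, mem_cl_self])]
  | _ => rfl

lemma acceptingAt_congr {V W : Labeling P} {ψ : RFormula P} {k : Fin 4}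
    (h : ∀ χ ∈ cl ψ, V χ = W χ) : AcceptingAt V ψ k ↔ AcceptingAt W ψ k := by
  cases ψ with
  | always χ | eventually χ =>
    simp only [AcceptingAt, h _ (mem_cl_self _), h χ (by simp [cl, mem_cl_self])]
  | _ => rfl

lemma IsAcceptingRun.congr (h : IsAcceptingRun S σ V) (hS : ∀ ψ ∈ S, cl ψ ⊆ S)
    (hVW : ∀ t, ∀ ψ ∈ S, V t ψ = W t ψ) : IsAcceptingRun S σ W := by
  have hcl : ∀ t, ∀ ψ ∈ S, ∀ χ ∈ cl ψ, V t χ = W t χ := fun t ψ hψ χ hχ =>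
    hVW t χ (hS ψ hψ hχ)
  refine ⟨fun t ψ hψ => ?_, fun t ψ hψ => ?_, fun ψ hψ k => ?_⟩
  · exact (consistentAt_congr (hcl t ψ hψ)).1 (h.consistentAt t ψ hψ)
  · exact (stepAt_congr (hcl t ψ hψ) (hcl (t + 1) ψ hψ)).1 (h.stepAt t ψ hψ)
  · exact (h.acceptingAt ψ hψ k).mono fun t ht => (acceptingAt_congr (hcl t ψ hψ)).1 ht

end Labelings

section Runs

variable {P : Type} [DecidableEq P] {σ : ℕ → Set P}

theorem IsAcceptingRun.fst_eq_rV :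
    ∀ {ψ : RFormula P} {V : ℕ → Labeling P}, IsAcceptingRun (cl ψ) σ V →
      ∀ t, (V t ψ).1 = rV ψ (suffix σ t)
  | .atom p, V, h, t => by
    rw [h.stepAt t _ (mem_cl_self _)]
    rfl
  | .not χ, V, h, t => by
    rw [h.consistentAt t _ (mem_cl_self _), (h.mono (Finset.subset_insert _ _)).fst_eq_rV t]
    rfl
  | .and χ₁ χ₂, V, h, t | .or χ₁ χ₂, V, h, t | .imp χ₁ χ₂, V, h, t => by
    rw [h.consistentAt t _ (mem_cl_self _),
      (h.mono (Finset.subset_union_left.trans (Finset.subset_insert _ _))).fst_eq_rV t,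
      (h.mono (Finset.subset_union_right.trans (Finset.subset_insert _ _))).fst_eq_rV t]
    rfl
  | .always χ, V, h, t => by
    have hχ := (h.mono (Finset.subset_insert _ _)).fst_eq_rV (ψ := χ)
    rw [fst_eq_alwaysVal_of_run (x := fun t => (V t χ).1) (s := fun t => V t (.always χ))
      (fun t => h.stepAt t _ (mem_cl_self _)) (fun k => h.acceptingAt _ (mem_cl_self _) k) t]
    simp only [hχ, rV_always, suffix_suffix]
  | .eventually χ, V, h, t => by
    have hχ := (h.mono (Finset.subset_insert _ _)).fst_eq_rV (ψ := χ)
    rw [eq_eventuallyVal_of_run (x := fun t => (V t χ).1) (a := fun t => (V t (.eventually χ)).1)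
      (fun t => h.stepAt t _ (mem_cl_self _)) (fun k => h.acceptingAt _ (mem_cl_self _) k) t]
    simp only [hχ, rV_eventually, suffix_suffix]

end Runs

section Canonical

variable {P : Type}

noncomputable def canonLabeling (σ : ℕ → Set P) : Labeling P
  | .always χ => alwaysSlot fun i => rV χ (suffix σ i)
  | ψ => (rV ψ σ, true, true)

@[simp] lemma canonLabeling_fst (σ : ℕ → Set P) (ψ : RFormula P) :
    (canonLabeling σ ψ).1 = rV ψ σ := by
  cases ψ <;> rfl

lemma canonLabeling_always (σ : ℕ → Set P) (χ : RFormula P) :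
    canonLabeling σ (.always χ) = alwaysSlot fun i => rV χ (suffix σ i) := rfl

lemma alwaysGuessConsistent_canonLabeling (σ : ℕ → Set P) :
    ∀ χ : RFormula P, AlwaysGuessConsistent χ (canonLabeling σ (.always χ)) (rV χ σ)
  | .atom p => alwaysSlot_snd_of_boolean fun i => rV_atom_eq_ttop_or_tbot p _
  | .not χ => alwaysSlot_snd_of_boolean fun i => rV_not_eq_ttop_or_tbot χ _
  | .and _ _ | .or _ _ | .imp _ _ => trivial
  | .always χ => by
    have h := antitone_rV_always_suffix χ σ
    exact (alwaysSlot_snd_of_antitone h.1 h.2).trans (by simp only [suffix_zero]; rfl)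
  | .eventually χ => by
    have h := antitone_rV_eventually_suffix χ σ
    exact (alwaysSlot_snd_of_antitone h.1 h.2).trans (by simp only [suffix_zero]; rfl)

lemma consistentAt_canonLabeling (σ : ℕ → Set P) : ∀ ψ, ConsistentAt (canonLabeling σ) ψ
  | .atom p => ⟨rV_atom_eq_ttop_or_tbot p σ, rfl⟩
  | .not _ | .and _ _ | .or _ _ | .imp _ _ => by
    simp only [ConsistentAt, canonLabeling_fst]
    rfl
  | .always χ =>
    ⟨tvMono_rV (.always χ) σ, by simpa using alwaysGuessConsistent_canonLabeling σ χ⟩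
  | .eventually χ => ⟨tvMono_rV (.eventually χ) σ, rfl⟩

lemma stepAt_canonLabeling (σ : ℕ → Set P) :
    ∀ ψ, StepAt (canonLabeling σ) (σ 0) (canonLabeling (suffix σ 1)) ψ
  | .atom _ => rfl
  | .not _ | .and _ _ | .or _ _ | .imp _ _ => trivial
  | .always χ => by
    simpa only [StepAt, canonLabeling_fst, canonLabeling_always, suffix_suffix, suffix_zero] using
      alwaysStep_alwaysSlot fun i => rV χ (suffix σ i)
  | .eventually χ => by
    simpa only [StepAt, canonLabeling_fst, rV_eventually, suffix_suffix, suffix_zero] using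
      eventuallyStep_eventuallyVal fun i => rV χ (suffix σ i)

lemma frequently_acceptingAt_canonLabeling (σ : ℕ → Set P) (k : Fin 4) :
    ∀ ψ, ∃ᶠ t in atTop, AcceptingAt (canonLabeling (suffix σ t)) ψ k
  | .always χ => by
    simpa only [AcceptingAt, canonLabeling_fst, canonLabeling_always, suffix_suffix] using
      frequently_alwaysAcc_alwaysSlot (fun i => rV χ (suffix σ i)) k
  | .eventually χ => by
    simpa only [AcceptingAt, canonLabeling_fst, rV_eventually, suffix_suffix] using
      frequently_eventuallyAcc_eventuallyVal (fun i => rV χ (suffix σ i)) k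
  | .atom _ | .not _ | .and _ _ | .or _ _ | .imp _ _ => Frequently.of_forall fun _ => trivial

theorem isAcceptingRun_canonLabeling (S : Finset (RFormula P)) (σ : ℕ → Set P) :
    IsAcceptingRun S σ fun t => canonLabeling (suffix σ t) where
  consistentAt t ψ _ := consistentAt_canonLabeling _ ψ
  stepAt t ψ _ := by
    simpa only [suffix_suffix, suffix_apply, Nat.add_zero] using
      stepAt_canonLabeling (suffix σ t) ψ
  acceptingAt ψ _ k := frequently_acceptingAt_canonLabeling σ k ψ

end Canonical

section Transport

variable {S Q Q' : Type}

def GBA.congr (A : GBA S Q) (e : Q ≃ Q') : GBA S Q' where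
  Δ q a q' := A.Δ (e.symm q) a (e.symm q')
  Acc := A.Acc.map ⟨fun F => e.symm ⁻¹' F, Set.preimage_injective.2 e.symm.surjective⟩

lemma GBA.card_acc_congr (A : GBA S Q) (e : Q ≃ Q') : (A.congr e).Acc.card = A.Acc.card :=
  Finset.card_map _

lemma GBA.acceptsFrom_congr (A : GBA S Q) (e : Q ≃ Q') (q : Q) (σ : ℕ → S) :
    AcceptsFrom (A.congr e) (e q) σ ↔ AcceptsFrom A q σ := by
  constructor
  · rintro ⟨ρ, h0, hΔ, hF⟩
    exact ⟨fun t => e.symm (ρ t), by simp [h0], hΔ,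
      fun F hF' => hF _ (Finset.mem_map_of_mem _ hF')⟩
  · rintro ⟨ρ, h0, hΔ, hF⟩
    refine ⟨fun t => e (ρ t), by simp [h0], by simpa [GBA.congr] using hΔ, fun F hF' => ?_⟩
    obtain ⟨G, hG, rfl⟩ := Finset.mem_map.1 hF'
    simpa using hF G hG

end Transport

section Automaton

variable {P : Type} [DecidableEq P]

noncomputable def toLabeling {φ : RFormula P} (v : cl φ → Slot) : Labeling P :=
  Function.extend Subtype.val v default

lemma toLabeling_apply {φ : RFormula P} (v : cl φ → Slot) {ψ : RFormula P} (h : ψ ∈ cl φ) :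
    toLabeling v ψ = v ⟨ψ, h⟩ :=
  Subtype.val_injective.extend_apply v default ⟨ψ, h⟩

abbrev B₄ : Type := {b : TV // TVMono b}

abbrev LabelState (φ : RFormula P) : Type :=
  {v : cl φ → Slot // ∀ ψ ∈ cl φ, ConsistentAt (toLabeling v) ψ}

/-- The initial state `q_b` is `Sum.inr b`; it moves like any consistent labeling in which `φ`
has value `b`. -/
abbrev AutomatonState (φ : RFormula P) : Type := LabelState φ ⊕ B₄

def automatonStep (φ : RFormula P) : AutomatonState φ → Set P → AutomatonState φ → Prop
  | .inl v, a, .inl w => ∀ ψ ∈ cl φ, StepAt (toLabeling v.1) a (toLabeling w.1) ψ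
  | .inr b, a, .inl w => ∃ v : LabelState φ, (toLabeling v.1 φ).1 = b.1 ∧
      ∀ ψ ∈ cl φ, StepAt (toLabeling v.1) a (toLabeling w.1) ψ
  | _, _, .inr _ => False

lemma not_automatonStep_inr {φ : RFormula P} (q : AutomatonState φ) (a : Set P) (b : B₄) :
    ¬automatonStep φ q a (.inr b) := by
  cases q <;> exact id

def acceptanceSet (φ ψ : RFormula P) (k : Fin 4) : Set (AutomatonState φ) :=
  Sum.inl '' {v | AcceptingAt (toLabeling v.1) ψ k}

open scoped Classical in
noncomputable def rltlAutomaton (φ : RFormula P) : GBA (Set P) (AutomatonState φ) where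
  Δ := automatonStep φ
  Acc := Finset.univ.image fun p : cl φ × Fin 4 => acceptanceSet φ p.1 p.2

lemma card_acc_rltlAutomaton_le (φ : RFormula P) :
    (rltlAutomaton φ).Acc.card ≤ 4 * (cl φ).card := by
  refine Finset.card_image_le.trans ?_
  simp [Nat.mul_comm]

lemma mem_acc_rltlAutomaton {φ ψ : RFormula P} (hψ : ψ ∈ cl φ) (k : Fin 4) :
    acceptanceSet φ ψ k ∈ (rltlAutomaton φ).Acc := by
  classical
  exact Finset.mem_image_of_mem _ (Finset.mem_univ ((⟨ψ, hψ⟩, k) : cl φ × Fin 4))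

theorem acceptsFrom_rltlAutomaton_inr_iff {φ : RFormula P} (b : B₄) (σ : ℕ → Set P) :
    AcceptsFrom (rltlAutomaton φ) (.inr b) σ ↔
      ∃ V, IsAcceptingRun (cl φ) σ V ∧ (V 0 φ).1 = b.1 := by
  constructor
  · rintro ⟨ρ, h0, hΔ, hF⟩
    have hinl : ∀ t, ∃ w, ρ (t + 1) = .inl w := fun t => by
      have := hΔ t
      cases h : ρ (t + 1) with
      | inl w => exact ⟨w, rfl⟩
      | inr _ => exact (not_automatonStep_inr _ _ _ (h ▸ this)).elim
    choose w hw using hinl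
    have hΔ0 := hΔ 0
    rw [h0, hw 0] at hΔ0
    obtain ⟨v, hvb, hv⟩ := hΔ0
    let u : ℕ → LabelState φ := fun t => match t with
      | 0 => v
      | t + 1 => w t
    refine ⟨fun t => toLabeling (u t).1,
      ⟨fun t => (u t).2, fun t => ?_, fun ψ hψ k => ?_⟩, hvb⟩
    · cases t with
      | zero => exact hv
      | succ t =>
        have := hΔ (t + 1)
        rwa [hw t, hw (t + 1)] at this
    · refine frequently_atTop.2 fun i => ?_
      obtain ⟨j, hij, hj⟩ := hF _ (mem_acc_rltlAutomaton hψ k) (i + 1)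
      obtain ⟨j, rfl⟩ : ∃ j', j = j' + 1 := ⟨j - 1, by omega⟩
      rw [hw j] at hj
      obtain ⟨_, hj, hwj⟩ := hj
      obtain rfl := Sum.inl_injective hwj
      exact ⟨j + 1, by omega, hj⟩
  · rintro ⟨V, hV, hb⟩
    have hV' : IsAcceptingRun (cl φ) σ fun t => toLabeling fun ψ : cl φ => V t ψ :=
      hV.congr (fun _ => cl_subset_of_mem) fun t ψ hψ =>
        (toLabeling_apply (fun ψ : cl φ => V t ψ) hψ).symm
    let u : ℕ → LabelState φ := fun t => ⟨fun ψ => V t ψ, hV'.consistentAt t⟩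
    refine ⟨fun t => match t with
      | 0 => .inr b
      | t + 1 => .inl (u (t + 1)), rfl, fun t => ?_, fun F hF i => ?_⟩
    · cases t with
      | zero => exact ⟨u 0, by rw [toLabeling_apply _ (mem_cl_self φ)]; exact hb, hV'.stepAt 0⟩
      | succ t => exact hV'.stepAt (t + 1)
    · classical
      obtain ⟨⟨⟨ψ, hψ⟩, k⟩, -, rfl⟩ := Finset.mem_image.1 hF
      obtain ⟨j, hij, hj⟩ := frequently_atTop.1 (hV'.acceptingAt ψ hψ k) (i + 1)
      obtain ⟨j, rfl⟩ : ∃ j', j = j' + 1 := ⟨j - 1, by omega⟩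
      exact ⟨j + 1, by omega, u (j + 1), hj, rfl⟩

end Automaton

section Counting

variable {P : Type}

def guessCode (g : Bool × Bool) : TV := (false, g.1 && g.2, g.1, g.1 || g.2)

lemma guessCode_injective : Function.Injective guessCode := by
  unfold Function.Injective
  decide

/-- The value of a Boolean connective is determined by its arguments, so its position is free to
hold the guesses of `□·` applied to it. -/
def encode (V : Labeling P) : RFormula P → TV
  | .not _ => ttop
  | .and χ₁ χ₂ => guessCode (V (.always (.and χ₁ χ₂))).2
  | .or χ₁ χ₂ => guessCode (V (.always (.or χ₁ χ₂))).2
  | .imp χ₁ χ₂ => guessCode (V (.always (.imp χ₁ χ₂))).2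
  | ψ => (V ψ).1

lemma tvMono_encode {V : Labeling P} :
    ∀ {ψ : RFormula P}, ConsistentAt V ψ → TVMono (encode V ψ)
  | .atom _, h => by rcases h.1 with h | h <;> simp only [encode, h] <;> decide
  | .not _, _ => (by decide : TVMono ttop)
  | .and _ _, _ | .or _ _, _ | .imp _ _, _ => (by decide : ∀ g, TVMono (guessCode g)) _
  | .always _, h | .eventually _, h => h.1

variable [DecidableEq P]

theorem eq_of_encode_eq {V W : Labeling P} : ∀ {ψ : RFormula P},
    (∀ χ ∈ cl ψ, ConsistentAt V χ ∧ ConsistentAt W χ ∧ encode V χ = encode W χ) →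
      V ψ = W ψ
  | .atom _, h | .eventually _, h => by
    obtain ⟨⟨_, hV⟩, ⟨_, hW⟩, he⟩ := h _ (mem_cl_self _)
    exact Prod.ext he (hV.trans hW.symm)
  | .not χ, h => by
    obtain ⟨hV, hW, -⟩ := h _ (mem_cl_self _)
    rw [hV, hW, eq_of_encode_eq fun χ' hχ' => h χ' (Finset.subset_insert _ _ hχ')]
  | .and χ₁ χ₂, h | .or χ₁ χ₂, h | .imp χ₁ χ₂, h => by
    obtain ⟨hV, hW, -⟩ := h _ (mem_cl_self _)
    rw [hV, hW, eq_of_encode_eq fun χ' hχ' =>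
        h χ' (Finset.subset_insert _ _ (Finset.subset_union_left hχ')),
      eq_of_encode_eq fun χ' hχ' =>
        h χ' (Finset.subset_insert _ _ (Finset.subset_union_right hχ'))]
  | .always (.atom _), h | .always (.not _), h => by
    obtain ⟨⟨_, hV : (V _).2 = _⟩, ⟨_, hW : (W _).2 = _⟩, he : (V _).1 = (W _).1⟩ :=
      h _ (mem_cl_self _)
    exact Prod.ext he (by rw [hV, hW, he])
  | .always (.always χ), h | .always (.eventually χ), h => by
    obtain ⟨⟨_, hV : (V _).2 = _⟩, ⟨_, hW : (W _).2 = _⟩, he : (V _).1 = (W _).1⟩ :=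
      h _ (mem_cl_self _)
    have hχ := eq_of_encode_eq fun χ' hχ' => h χ' (Finset.subset_insert _ _ hχ')
    exact Prod.ext he (by rw [hV, hW, he, hχ])
  | .always (.and _ _), h | .always (.or _ _), h | .always (.imp _ _), h =>
    Prod.ext (h _ (mem_cl_self _)).2.2
      (guessCode_injective (h _ (Finset.mem_insert_of_mem (mem_cl_self _))).2.2)

lemma exists_atom_mem_cl (φ : RFormula P) : ∃ p, .atom p ∈ cl φ := by
  induction φ with
  | atom p => exact ⟨p, mem_cl_self _⟩
  | not _ ih | always _ ih | eventually _ ih =>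
    obtain ⟨p, hp⟩ := ih
    exact ⟨p, Finset.mem_insert_of_mem hp⟩
  | and _ _ ih _ | or _ _ ih _ | imp _ _ ih _ =>
    obtain ⟨p, hp⟩ := ih
    exact ⟨p, Finset.mem_insert_of_mem (Finset.mem_union_left _ hp)⟩

noncomputable def LabelState.encode {φ : RFormula P} (v : LabelState φ) : cl φ → B₄ :=
  fun ψ => ⟨_root_.encode (toLabeling v.1) ψ, tvMono_encode (v.2 ψ ψ.2)⟩

lemma LabelState.encode_injective (φ : RFormula P) :
    Function.Injective (LabelState.encode (φ := φ)) := by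
  intro v w hvw
  have he : ∀ ψ ∈ cl φ,
      _root_.encode (toLabeling v.1) ψ = _root_.encode (toLabeling w.1) ψ :=
    fun ψ hψ => congrArg Subtype.val (congrFun hvw ⟨ψ, hψ⟩)
  refine Subtype.ext (funext fun ψ => ?_)
  rw [← toLabeling_apply v.1 ψ.2, ← toLabeling_apply w.1 ψ.2]
  exact eq_of_encode_eq fun χ hχ =>
    have hχφ := cl_subset_of_mem ψ.2 hχ
    ⟨v.2 χ hχφ, w.2 χ hχφ, he χ hχφ⟩

lemma LabelState.encode_not_surjective (φ : RFormula P) :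
    ¬Function.Surjective (LabelState.encode (φ := φ)) := by
  intro hsurj
  obtain ⟨p, hp⟩ := exists_atom_mem_cl φ
  obtain ⟨v, hv⟩ := hsurj fun _ => ⟨(false, false, false, true), by decide⟩
  have hvp := congrArg Subtype.val (congrFun hv ⟨_, hp⟩)
  rcases (v.2 _ hp).1 with h | h <;>
    simp [LabelState.encode, _root_.encode, h, ttop, tbot] at hvp

lemma card_labelState_lt (φ : RFormula P) : Nat.card (LabelState φ) < 5 ^ (cl φ).card := by
  have := Fintype.ofFinite (LabelState φ)
  have h := Fintype.card_lt_of_injective_not_surjective _ (LabelState.encode_injective φ)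
    (LabelState.encode_not_surjective φ)
  rwa [Fintype.card_fun, Fintype.card_coe, (by decide : Fintype.card B₄ = 5),
    ← Nat.card_eq_fintype_card] at h

lemma card_automatonState (φ : RFormula P) :
    Nat.card (AutomatonState φ) = Nat.card (LabelState φ) + 5 := by
  rw [Nat.card_sum, Nat.card_eq_fintype_card (α := B₄), (by decide : Fintype.card B₄ = 5)]

end Counting

theorem exists_GBA_for_rLTL_general {P : Type} [DecidableEq P]
    (φ : RFormula P) :
    ∃ (n : ℕ) (A : GBA (Set P) (Fin n)) (q : {b : TV // TVMono b} → Fin n),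
      0 < n
      ∧ n ≤ 5 ^ (cl φ).card + 4
      ∧ A.Acc.card ≤ 4 * (cl φ).card
      ∧ ∀ (b : {b : TV // TVMono b}) (σ : ℕ → Set P),
          AcceptsFrom A (q b) σ ↔ rV φ σ = b.val := by
  let e := Finite.equivFin (AutomatonState φ)
  have hcard := card_automatonState φ
  have hlt := card_labelState_lt φ
  refine ⟨Nat.card (AutomatonState φ), (rltlAutomaton φ).congr e, fun b => e (.inr b), by omega,
    by omega, (GBA.card_acc_congr _ e).trans_le (card_acc_rltlAutomaton_le φ), fun b σ => ?_⟩
  rw [GBA.acceptsFrom_congr, acceptsFrom_rltlAutomaton_inr_iff]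
  constructor
  · rintro ⟨V, hV, hb⟩
    rw [← hb, hV.fst_eq_rV 0, suffix_zero]
  · intro h
    exact ⟨_, isAcceptingRun_canonLabeling (cl φ) σ, by simp [h]⟩

/-- For every rLTL(□,◇) formula `φ` over a nonempty finite set `𝒫` of atomic
propositions there is a generalized Büchi automaton over `Σ = 2^𝒫`, with at most
`5^|cl(φ)| + 4` states and at most `4·|cl(φ)|` acceptance sets, together with a family of
states `(q_b)_{b ∈ B₄}`, such that for every `b ∈ B₄` and every `σ ∈ Σ^ω` the automaton has
an accepting run on `σ` starting in `q_b` if and only if `V(σ,φ) = b`. -/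
theorem exists_GBA_for_rLTL {P : Type} [Fintype P] [Nonempty P] [DecidableEq P]
    (φ : RFormula P) :
    ∃ (n : ℕ) (A : GBA (Set P) (Fin n)) (q : {b : TV // TVMono b} → Fin n),
      0 < n
      ∧ n ≤ 5 ^ (cl φ).card + 4
      ∧ A.Acc.card ≤ 4 * (cl φ).card
      ∧ ∀ (b : {b : TV // TVMono b}) (σ : ℕ → Set P),
          AcceptsFrom A (q b) σ ↔ rV φ σ = b.val :=
  exists_GBA_for_rLTL_general φ
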